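/- arXiv:2309.08676 — 5 statements merged into one kernel-verified Lean document; each statement's English description precedes it below -/
import Mathlib

section
/- Let P₁, P₂ be commuting Hermitian Pauli observables and Λ(P₁,P₂) = (I+P₁)/2 + ((I−P₁)/2)P₂. Then for any Pauli unitary Q, Λ(P₁,P₂) Q Λ(P₁,P₂) = P₁^{[P₂,Q]} Q P₂^{[P₁,Q]}, where exponents are commutator bits in F_2 and an operator to the power 0 is the identity. -/
open Matrix
open scoped Classical

noncomputable section

/-- Operators on `n` qubits, as matrices indexed by computational basis states. -/
abbrev QOp (n : ℕ) : Type := Matrix (Fin n → Fin 2) (Fin n → Fin 2) ℂ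

/-- The single-qubit Pauli matrices `I, X, Y, Z`. -/
def sigma1 (t : Fin 4) : Matrix (Fin 2) (Fin 2) ℂ :=
  if t = 0 then 1
  else if t = 1 then !![0, 1; 1, 0]
  else if t = 2 then !![0, -Complex.I; Complex.I, 0]
  else !![1, 0; 0, -1]

/-- Tensor product of single-qubit Pauli matrices, as an `n`-qubit operator. -/
def pauliTensor (n : ℕ) (a : Fin n → Fin 4) : QOp n :=
  Matrix.of fun i j => ∏ k, sigma1 (a k) (i k) (j k)

/-- `P` is an `n`-qubit Pauli unitary: `i^s` times a tensor product of `I,X,Y,Z`. -/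
def IsPauli {n : ℕ} (P : QOp n) : Prop :=
  ∃ (s : Fin 4) (a : Fin n → Fin 4), P = Complex.I ^ (s : ℕ) • pauliTensor n a

/-- The `F₂` commutator bit: `0` if the operators commute, `1` otherwise. -/
def commBit {n : ℕ} (P Q : QOp n) : ZMod 2 := if P * Q = Q * P then 0 else 1

/-- The controlled-Pauli operator `Λ(P₁,P₂) = (I+P₁)/2 + ((I−P₁)/2)·P₂`. -/
def ctrlPauli {n : ℕ} (P₁ P₂ : QOp n) : QOp n :=
  (2 : ℂ)⁻¹ • (1 + P₁) + ((2 : ℂ)⁻¹ • (1 - P₁)) * P₂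

/-! Any two Pauli operators commute or anticommute, so `P₁ Q = Q (±P₁)` and `P₂ Q = Q (±P₂)`, and
pushing `Q` through `Λ(P₁,P₂)` turns it into `Λ(±P₁,±P₂)`. Flipping the sign of `P₂` multiplies
`Λ` on the left by `P₁`, flipping the sign of `P₁` multiplies it by `P₂`, and `Λ² = 1` because
`Λ = Π₊ + Π₋ P₂` with complementary projections `Π± = (1 ± P₁)/2` commuting with `P₂`. -/

lemma sigma1_mul_comm_units (t u : Fin 4) :
    ∃ ε : ℤˣ, sigma1 t * sigma1 u = ε • (sigma1 u * sigma1 t) := by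
  refine ⟨if t = 0 ∨ u = 0 ∨ t = u then 1 else -1, ?_⟩
  fin_cases t <;> fin_cases u <;> ext i j <;> fin_cases i <;> fin_cases j <;>
    simp [sigma1, Matrix.mul_apply, Fin.sum_univ_two]

lemma pauliTensor_mul (n : ℕ) (a b : Fin n → Fin 4) :
    pauliTensor n a * pauliTensor n b
      = Matrix.of fun i j => ∏ k, (sigma1 (a k) * sigma1 (b k)) (i k) (j k) := by
  ext i j
  simp only [pauliTensor, Matrix.mul_apply, Matrix.of_apply, Finset.prod_univ_sum,
    Fintype.piFinset_univ, Finset.prod_mul_distrib]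

lemma pauliTensor_mul_comm_units (n : ℕ) (a b : Fin n → Fin 4) :
    ∃ ε : ℤˣ, pauliTensor n a * pauliTensor n b = ε • (pauliTensor n b * pauliTensor n a) := by
  choose ε hε using fun k => sigma1_mul_comm_units (a k) (b k)
  refine ⟨∏ k, ε k, ?_⟩
  ext i j
  simp only [pauliTensor_mul, hε, Matrix.of_apply, Matrix.smul_apply, Finset.prod_smul]

lemma IsPauli.mul_comm_units {n : ℕ} {P Q : QOp n} (hP : IsPauli P) (hQ : IsPauli Q) :
    ∃ ε : ℤˣ, P * Q = ε • (Q * P) := by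
  obtain ⟨s, a, rfl⟩ := hP
  obtain ⟨r, b, rfl⟩ := hQ
  obtain ⟨ε, hε⟩ := pauliTensor_mul_comm_units n a b
  refine ⟨ε, ?_⟩
  simp only [Matrix.smul_mul, Matrix.mul_smul, hε, smul_comm ε]
  rw [smul_smul, smul_smul, mul_comm]

lemma IsPauli.commBit_cases {n : ℕ} {P Q : QOp n} (hP : IsPauli P) (hQ : IsPauli Q) :
    commBit P Q = 0 ∧ P * Q = Q * P ∨ commBit P Q = 1 ∧ P * Q = Q * -P := by
  by_cases h : P * Q = Q * P
  · exact Or.inl ⟨if_pos h, h⟩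
  · obtain ⟨ε, hε⟩ := hP.mul_comm_units hQ
    rcases Int.units_eq_one_or ε with rfl | rfl
    · exact absurd (by simpa using hε) h
    · exact Or.inr ⟨if_neg h, by simpa using hε⟩

section CtrlPauli

variable {n : ℕ} {P₁ P₂ P₁' P₂' Q : QOp n}

lemma ctrlPauli_mul_of_mul_eq (h₁ : P₁ * Q = Q * P₁') (h₂ : P₂ * Q = Q * P₂') :
    ctrlPauli P₁ P₂ * Q = Q * ctrlPauli P₁' P₂' := by
  have h₁₂ : P₁ * P₂ * Q = Q * (P₁' * P₂') := by rw [mul_assoc, h₂, ← mul_assoc, h₁, mul_assoc]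
  simp only [ctrlPauli, add_mul, mul_add, sub_mul, mul_sub, Matrix.smul_mul, Matrix.mul_smul,
    one_mul, mul_one, h₁, h₂, h₁₂]

lemma ctrlPauli_neg_right (h₁ : P₁ * P₁ = 1) : ctrlPauli P₁ (-P₂) = P₁ * ctrlPauli P₁ P₂ := by
  simp only [ctrlPauli, mul_add, sub_mul, mul_sub, Matrix.smul_mul, Matrix.mul_smul,
    one_mul, mul_one, mul_neg, ← mul_assoc, h₁]
  module

lemma ctrlPauli_neg_left (h₂ : P₂ * P₂ = 1) (hcomm : P₁ * P₂ = P₂ * P₁) :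
    ctrlPauli (-P₁) P₂ = P₂ * ctrlPauli P₁ P₂ := by
  simp only [ctrlPauli, mul_add, sub_mul, mul_sub, Matrix.smul_mul, Matrix.mul_smul,
    one_mul, mul_one, neg_mul, ← mul_assoc, h₂, hcomm]
  module

lemma ctrlPauli_mul_self (h₁ : P₁ * P₁ = 1) (h₂ : P₂ * P₂ = 1) (hcomm : P₁ * P₂ = P₂ * P₁) :
    ctrlPauli P₁ P₂ * ctrlPauli P₁ P₂ = 1 := by
  have h₁' (X : QOp n) : P₁ * (P₁ * X) = X := by rw [← mul_assoc, h₁, one_mul]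
  have hcomm' (X : QOp n) : P₂ * (P₁ * X) = P₁ * (P₂ * X) := by
    rw [← mul_assoc, ← hcomm, mul_assoc]
  simp only [ctrlPauli, add_mul, mul_add, sub_mul, mul_sub, Matrix.smul_mul, Matrix.mul_smul,
    one_mul, mul_one, mul_assoc, h₁, h₂, h₁', hcomm', ← hcomm]
  module

end CtrlPauli

theorem ctrlPauli_conj_general (n : ℕ) (P₁ P₂ Q : QOp n)
    (h1 : IsPauli P₁) (h2 : IsPauli P₂) (hQ : IsPauli Q)
    (h1sq : P₁ * P₁ = 1) (h2sq : P₂ * P₂ = 1)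
    (hcomm : P₁ * P₂ = P₂ * P₁) :
    ctrlPauli P₁ P₂ * Q * ctrlPauli P₁ P₂
      = P₁ ^ (commBit P₂ Q).val * Q * P₂ ^ (commBit P₁ Q).val := by
  have hΛ := ctrlPauli_mul_self h1sq h2sq hcomm
  rcases h1.commBit_cases hQ with ⟨hb₁, hc₁⟩ | ⟨hb₁, hc₁⟩ <;>
    rcases h2.commBit_cases hQ with ⟨hb₂, hc₂⟩ | ⟨hb₂, hc₂⟩ <;>
    rw [ctrlPauli_mul_of_mul_eq hc₁ hc₂, hb₁, hb₂, mul_assoc] <;>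
    simp only [ZMod.val_zero, ZMod.val_one, pow_zero, pow_one, one_mul, mul_one]
  · rw [hΛ, mul_one]
  · rw [ctrlPauli_neg_right h1sq, mul_assoc, hΛ, mul_one, hc₁]
  · rw [ctrlPauli_neg_left h2sq hcomm, mul_assoc, hΛ, mul_one]
  · rw [ctrlPauli_neg_right (by rw [neg_mul_neg, h1sq]), ctrlPauli_neg_left h2sq hcomm,
      mul_assoc, mul_assoc, hΛ, mul_one, ← mul_assoc, hc₁]

/-- Conjugation of a Pauli unitary `Q` by the controlled-Pauli:
`Λ(P₁,P₂) Q Λ(P₁,P₂) = P₁^{[P₂,Q]} Q P₂^{[P₁,Q]}`. -/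
theorem ctrlPauli_conj (n : ℕ) (P₁ P₂ Q : QOp n)
    (h1 : IsPauli P₁) (h2 : IsPauli P₂) (hQ : IsPauli Q)
    (h1h : P₁ᴴ = P₁) (h2h : P₂ᴴ = P₂)
    (h1sq : P₁ * P₁ = 1) (h2sq : P₂ * P₂ = 1)
    (hcomm : P₁ * P₂ = P₂ * P₁) :
    ctrlPauli P₁ P₂ * Q * ctrlPauli P₁ P₂
      = P₁ ^ (commBit P₂ Q).val * Q * P₂ ^ (commBit P₁ Q).val :=
  ctrlPauli_conj_general n P₁ P₂ Q h1 h2 hQ h1sq h2sq hcomm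
end
end

section
/- Let P₁, ..., P_{2m} be Pauli unitaries such that the 2m×2m matrix B over F_2 with B_{ij} = [P_i, P_j] is invertible. Then there exists an invertible 2m×2m matrix F over F_2 such that the Pauli operators Q_j = P₁^{F_{j,1}} ··· P_{2m}^{F_{j,2m}} (j = 1,...,2m) form a symplectic basis, i.e., have the same pairwise commutation relations as X₁, Z₁, ..., X_m, Z_m. -/
open Matrix
open scoped Classical

noncomputable section

/-!
Any two Pauli operators commute up to a sign, so the commutator bit of the products
`Q_x = ∏ᵢ Pᵢ^{xᵢ}` and `Q_y` is the bilinear form `xᵀ B y` over `F₂`. This form is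
alternating (every operator commutes with itself) and nondegenerate (`B` is invertible), so
symplectic Gram–Schmidt, which repeatedly splits off a hyperbolic plane `span {u, w}` with
`B u w = 1`, yields vectors `v_j` whose Gram matrix is the standard one. The matrix `F` with
rows `v_j` satisfies `F B Fᵀ = J`, a permutation matrix, hence `F` is invertible.
-/

section SignCommute

variable {R : Type*} [Ring R]

def SignCommute (a b : R) (e : ZMod 2) : Prop := a * b = (-1) ^ e.val * (b * a)

lemma neg_one_pow_val_add (p q : ZMod 2) :
    (-1 : R) ^ (p + q).val = (-1) ^ p.val * (-1) ^ q.val := by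
  rw [ZMod.val_add, ← neg_one_pow_eq_pow_mod_two, pow_add]

lemma SignCommute.symm {a b : R} {e : ZMod 2} (h : SignCommute a b e) : SignCommute b a e := by
  unfold SignCommute at *
  rcases neg_one_pow_eq_or R e.val with hs | hs <;> simp [hs] at h ⊢ <;> simp [h]

lemma SignCommute.mul_left {a b c : R} {p q : ZMod 2} (ha : SignCommute a c p)
    (hb : SignCommute b c q) : SignCommute (a * b) c (p + q) := by
  unfold SignCommute at *
  rw [neg_one_pow_val_add]
  rcases neg_one_pow_eq_or R p.val with hp | hp <;>
    rcases neg_one_pow_eq_or R q.val with hq | hq <;>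
    simp only [hp, hq, one_mul, mul_neg, neg_mul, neg_neg] at ha hb ⊢ <;>
    rw [mul_assoc, hb] <;> simp only [mul_neg, ← mul_assoc, ha, neg_mul, neg_neg]

lemma SignCommute.pow_val_left {a c : R} {e : ZMod 2} (h : SignCommute a c e) (k : ZMod 2) :
    SignCommute (a ^ k.val) c (k * e) := by
  obtain rfl | rfl := (by decide : ∀ x : ZMod 2, x = 0 ∨ x = 1) k
  · simp [SignCommute]
  · simpa [ZMod.val_one] using h

lemma SignCommute.list_ofFn_prod_left {k : ℕ} {a : Fin k → R} {c : R} {e : Fin k → ZMod 2}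
    (h : ∀ i, SignCommute (a i) c (e i)) : SignCommute (List.ofFn a).prod c (∑ i, e i) := by
  induction k with
  | zero => simp [SignCommute]
  | succ k ih =>
    rw [List.ofFn_succ, List.prod_cons, Fin.sum_univ_succ]
    exact (h 0).mul_left (ih fun i => h i.succ)

end SignCommute

lemma sigma1_mul_self (t : Fin 4) : sigma1 t * sigma1 t = 1 := by
  fin_cases t <;>
  · ext i j
    fin_cases i <;> fin_cases j <;> simp [sigma1, mul_apply, Fin.sum_univ_two, one_apply]

lemma sigma1_commute_up_to_sign (s t : Fin 4) :
    ∃ c : ℂ, c ^ 2 = 1 ∧ sigma1 s * sigma1 t = c • (sigma1 t * sigma1 s) := by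
  refine ⟨if s = 0 ∨ t = 0 ∨ s = t then 1 else -1, by split_ifs <;> norm_num, ?_⟩
  fin_cases s <;> fin_cases t <;> ext i j <;> fin_cases i <;> fin_cases j <;>
    simp [sigma1, mul_apply, Fin.sum_univ_two]

lemma pauliTensor_mul_pauliTensor (n : ℕ) (a b : Fin n → Fin 4) :
    pauliTensor n a * pauliTensor n b =
      of fun i j => ∏ k, (sigma1 (a k) * sigma1 (b k)) (i k) (j k) := by
  ext i j
  simp only [pauliTensor, mul_apply, of_apply, Finset.prod_univ_sum]
  simp [Fintype.piFinset_univ, Finset.prod_mul_distrib]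

lemma pauliTensor_mul_self (n : ℕ) (a : Fin n → Fin 4) :
    pauliTensor n a * pauliTensor n a = 1 := by
  ext i j
  simp [pauliTensor_mul_pauliTensor, sigma1_mul_self, one_apply, Finset.prod_ite_zero, funext_iff]

lemma pauliTensor_commute_up_to_sign (n : ℕ) (a b : Fin n → Fin 4) :
    ∃ c : ℂ, c ^ 2 = 1 ∧
      pauliTensor n a * pauliTensor n b = c • (pauliTensor n b * pauliTensor n a) := by
  choose c hc hab using fun k => sigma1_commute_up_to_sign (a k) (b k)
  refine ⟨∏ k, c k, by simp [← Finset.prod_pow, hc], ?_⟩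
  ext i j
  simp [pauliTensor_mul_pauliTensor, hab, Finset.prod_mul_distrib]

lemma IsPauli.isUnit {n : ℕ} {P : QOp n} (hP : IsPauli P) : IsUnit P := by
  obtain ⟨s, a, rfl⟩ := hP
  exact IsUnit.smul (Units.mk0 Complex.I Complex.I_ne_zero ^ (s : ℕ))
    ⟨⟨_, _, pauliTensor_mul_self n a, pauliTensor_mul_self n a⟩, rfl⟩

lemma IsPauli.commute_up_to_sign {n : ℕ} {P Q : QOp n} (hP : IsPauli P) (hQ : IsPauli Q) :
    ∃ c : ℂ, c ^ 2 = 1 ∧ P * Q = c • (Q * P) := by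
  obtain ⟨s, a, rfl⟩ := hP
  obtain ⟨t, b, rfl⟩ := hQ
  obtain ⟨c, hc, hab⟩ := pauliTensor_commute_up_to_sign n a b
  refine ⟨c, hc, ?_⟩
  rw [smul_mul_smul_comm, smul_mul_smul_comm, hab, smul_smul, smul_smul]
  ring_nf

lemma commBit_comm {n : ℕ} (P Q : QOp n) : commBit P Q = commBit Q P := by
  simp only [commBit, eq_comm]

lemma commBit_eq_of_signCommute {n : ℕ} {P Q : QOp n} {e : ZMod 2} (h : SignCommute P Q e)
    (hQP : Q * P ≠ 0) : commBit P Q = e := by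
  unfold SignCommute at h
  obtain rfl | rfl := (by decide : ∀ x : ZMod 2, x = 0 ∨ x = 1) e
  · simp_all [commBit]
  · rw [ZMod.val_one, pow_one, neg_one_mul] at h
    rw [commBit, if_neg]
    intro hc
    refine hQP ((smul_eq_zero.1 ?_).resolve_left (two_ne_zero : (2 : ℂ) ≠ 0))
    rw [two_smul]
    nth_rw 1 [← hc]
    rw [h, neg_add_cancel]

lemma IsPauli.signCommute {n : ℕ} {P Q : QOp n} (hP : IsPauli P) (hQ : IsPauli Q) :
    SignCommute P Q (commBit P Q) := by
  obtain ⟨c, hc, h⟩ := hP.commute_up_to_sign hQ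
  unfold commBit
  split_ifs with hPQ
  · simpa [SignCommute] using hPQ
  · rcases sq_eq_one_iff.1 hc with rfl | rfl
    · exact absurd (by simpa using h) hPQ
    · simpa [SignCommute, ZMod.val_one] using h

theorem commBit_list_ofFn_prod_pow {n k : ℕ} {P : Fin k → QOp n} (hP : ∀ i, IsPauli (P i))
    (x y : Fin k → ZMod 2) :
    commBit (List.ofFn fun i => P i ^ (x i).val).prod (List.ofFn fun i => P i ^ (y i).val).prod =
      x ⬝ᵥ (of fun i j => commBit (P i) (P j)) *ᵥ y := by
  have hunit : ∀ z : Fin k → ZMod 2, IsUnit (List.ofFn fun i => P i ^ (z i).val).prod :=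
    fun z => List.prod_isUnit fun _ h => by
      obtain ⟨i, rfl⟩ := List.mem_ofFn.1 h
      exact (hP i).isUnit.pow _
  have hcol : ∀ i, SignCommute (P i) (List.ofFn fun i => P i ^ (y i).val).prod
      (((of fun i j => commBit (P i) (P j)) *ᵥ y) i) := fun i => by
    convert (SignCommute.list_ofFn_prod_left fun j =>
      ((hP j).signCommute (hP i)).pow_val_left (y j)).symm using 1
    simp [mulVec, dotProduct, commBit_comm (P i), mul_comm]
  exact commBit_eq_of_signCommute
    (SignCommute.list_ofFn_prod_left fun i => (hcol i).pow_val_left (x i))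
    ((hunit y).mul (hunit x)).ne_zero

open Module Submodule
open LinearMap (BilinForm)

namespace LinearMap.BilinForm

variable {K V : Type*} [Field K] [AddCommGroup V] [Module K V] {B : BilinForm K V}

lemma exists_apply_eq_one (hB : B.Nondegenerate) {u : V} (hu : u ≠ 0) : ∃ w, B u w = 1 := by
  obtain ⟨y, hy⟩ : ∃ y, B u y ≠ 0 := by
    by_contra! h
    exact hu (hB.1 u h)
  exact ⟨(B u y)⁻¹ • y, by rw [map_smul, smul_eq_mul, inv_mul_cancel₀ hy]⟩

lemma IsAlt.eq_zero_of_apply_smul_add_smul (hA : B.IsAlt) {u w : V} (huw : B u w = 1) {a b : K}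
    (hu : B u (a • u + b • w) = 0) (hw : B w (a • u + b • w) = 0) : a = 0 ∧ b = 0 := by
  simp only [map_add, map_smul, smul_eq_mul, hA.self_eq_zero, huw, ← hA.neg_eq u w] at hu hw
  exact ⟨by linear_combination -hw, by linear_combination hu⟩

lemma isCompl_span_pair_orthogonal [FiniteDimensional K V] (hA : B.IsAlt) {u w : V}
    (huw : B u w = 1) : IsCompl (span K {u, w}) (B.orthogonal (span K {u, w})) := by
  refine (isCompl_orthogonal_iff_disjoint hA.isRefl).2 (disjoint_def.2 fun x hx hx' => ?_)
  obtain ⟨a, b, rfl⟩ := mem_span_pair.1 hx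
  rw [mem_orthogonal_iff] at hx'
  obtain ⟨rfl, rfl⟩ := hA.eq_zero_of_apply_smul_add_smul huw
    (hx' u (subset_span (by simp))) (hx' w (subset_span (by simp)))
  simp

lemma finrank_span_pair (hA : B.IsAlt) {u w : V} (huw : B u w = 1) :
    finrank K (span K {u, w}) = 2 := by
  have hli : LinearIndependent K ![u, w] := LinearIndependent.pair_iff.2 fun a b h =>
    hA.eq_zero_of_apply_smul_add_smul huw (by rw [h, map_zero]) (by rw [h, map_zero])
  rw [← Matrix.range_cons_cons_empty, finrank_span_eq_card hli, Fintype.card_fin]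

lemma nondegenerate_restrict_orthogonal [FiniteDimensional K V] (hB : B.Nondegenerate)
    (hR : B.IsRefl) {W : Submodule K V} (hW : IsCompl W (B.orthogonal W)) :
    (B.restrict (B.orthogonal W)).Nondegenerate := by
  rw [restrict_nondegenerate_iff_isCompl_orthogonal hR, orthogonal_orthogonal hB hR]
  exact hW.symm

theorem exists_symplectic_pairs [FiniteDimensional K V] (hA : B.IsAlt) (hB : B.Nondegenerate)
    {m : ℕ} (hm : finrank K V = 2 * m) :
    ∃ e f : Fin m → V, (∀ i j, B (e i) (f j) = if i = j then 1 else 0) ∧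
      (∀ i j, B (e i) (e j) = 0) ∧ ∀ i j, B (f i) (f j) = 0 := by
  induction m generalizing V B with
  | zero => exact ⟨finZeroElim, finZeroElim, finZeroElim, finZeroElim, finZeroElim⟩
  | succ m ih =>
    have : Nontrivial V := finrank_pos_iff (R := K) |>.1 (by omega)
    obtain ⟨u, hu⟩ := exists_ne (0 : V)
    obtain ⟨w, huw⟩ := exists_apply_eq_one hB hu
    set W := span K {u, w}
    have hWm : finrank K (B.orthogonal W) = 2 * m := by
      rw [finrank_orthogonal hB, finrank_span_pair hA huw, hm]
      omega
    obtain ⟨e, f, hef, hee, hff⟩ := ih (B := B.restrict (B.orthogonal W)) (fun x => hA x)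
      (nondegenerate_restrict_orthogonal hB hA.isRefl (isCompl_span_pair_orthogonal hA huw)) hWm
    simp only [restrict_apply, domRestrict_apply] at hef hee hff
    have hu_orth : ∀ x : B.orthogonal W, B u x = 0 := fun x => x.2 u (subset_span (by simp))
    have hw_orth : ∀ x : B.orthogonal W, B w x = 0 := fun x => x.2 w (subset_span (by simp))
    have horth_u : ∀ x : B.orthogonal W, B x u = 0 := fun x => hA.isRefl _ _ (hu_orth x)
    have horth_w : ∀ x : B.orthogonal W, B x w = 0 := fun x => hA.isRefl _ _ (hw_orth x)
    refine ⟨Fin.cons u fun i => e i, Fin.cons w fun i => f i, ?_, ?_, ?_⟩ <;>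
      intro i j <;> cases i using Fin.cases <;> cases j using Fin.cases <;>
      simp [hA.self_eq_zero, huw, hu_orth, hw_orth, horth_u, horth_w, hef, hee, hff,
        Fin.succ_ne_zero, (Fin.succ_ne_zero _).symm]

theorem exists_symplectic_family_of_charTwo [CharP K 2] [FiniteDimensional K V] (hA : B.IsAlt)
    (hB : B.Nondegenerate) {m : ℕ} (hm : finrank K V = 2 * m) :
    ∃ v : Fin (2 * m) → V, ∀ j j',
      B (v j) (v j') = if j ≠ j' ∧ (j : ℕ) / 2 = (j' : ℕ) / 2 then 1 else 0 := by
  obtain ⟨e, f, hef, hee, hff⟩ := exists_symplectic_pairs hA hB hm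
  have hfe : ∀ i j, B (f i) (e j) = if i = j then 1 else 0 := fun i j => by
    rw [← hA.neg_eq, hef, CharTwo.neg_eq]
    exact if_congr eq_comm rfl rfl
  refine ⟨fun j => if (j : ℕ) % 2 = 0 then e ⟨(j : ℕ) / 2, by omega⟩
    else f ⟨(j : ℕ) / 2, by omega⟩, fun j j' => ?_⟩
  have hj := j.isLt
  have hj' := j'.isLt
  by_cases hjp : (j : ℕ) % 2 = 0 <;> by_cases hjp' : (j' : ℕ) % 2 = 0 <;>
    simp only [hjp, hjp', if_true, if_false, hef, hee, hff, hfe, ne_eq, Fin.ext_iff] <;>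
    split_ifs <;> first | rfl | omega

end LinearMap.BilinForm

/-- The involution of `Fin (2 * m)` exchanging `2k` and `2k + 1`. -/
def pairSwap (m : ℕ) : Equiv.Perm (Fin (2 * m)) :=
  Function.Involutive.toPerm (fun j => ⟨2 * ((j : ℕ) / 2) + (1 - (j : ℕ) % 2), by omega⟩)
    (fun j => by ext; simp only; omega)

lemma permMatrix_pairSwap (K : Type*) [Semiring K] (m : ℕ) :
    (pairSwap m).permMatrix K =
      of fun j j' : Fin (2 * m) => if j ≠ j' ∧ (j : ℕ) / 2 = (j' : ℕ) / 2 then 1 else 0 := by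
  ext j j'
  have hj : (pairSwap m j : ℕ) = 2 * ((j : ℕ) / 2) + (1 - (j : ℕ) % 2) := rfl
  simp only [Equiv.Perm.permMatrix, PEquiv.toMatrix_apply, Equiv.toPEquiv_apply, Option.mem_def,
    Option.some.injEq, of_apply]
  exact if_congr (by rw [Fin.ext_iff, hj, ne_eq, Fin.ext_iff]; omega) rfl rfl

lemma Matrix.mul_mul_transpose_apply {ι R : Type*} [Fintype ι] [NonUnitalCommSemiring R]
    (F M : Matrix ι ι R) (j j' : ι) : (F * M * Fᵀ) j j' = F j ⬝ᵥ M *ᵥ F j' := by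
  rw [dotProduct_mulVec]
  rfl

lemma Matrix.isUnit_of_isUnit_mul_mul_transpose {ι R : Type*} [Fintype ι] [DecidableEq ι]
    [CommRing R] {F M : Matrix ι ι R} (h : IsUnit (F * M * Fᵀ)) : IsUnit F := by
  rw [isUnit_iff_isUnit_det, det_mul, det_mul, det_transpose] at h
  exact (isUnit_iff_isUnit_det F).2 (isUnit_of_mul_isUnit_left (isUnit_of_mul_isUnit_left h))

/-- Symplectic Gram–Schmidt: if the commutation matrix `B` of Pauli unitaries `P₁,…,P_{2m}`
is invertible over `F₂`, there is an invertible `F` over `F₂` so that the products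
`Q_j = ∏ᵢ Pᵢ^{F_{j,i}}` form a symplectic basis, i.e. `Q_{2k-1}` and `Q_{2k}` anticommute
and all other pairs commute. -/
theorem symplectic_basis_exists (n m : ℕ) (P : Fin (2 * m) → QOp n)
    (hP : ∀ i, IsPauli (P i))
    (hB : IsUnit (Matrix.of (fun i j => commBit (P i) (P j)) :
        Matrix (Fin (2 * m)) (Fin (2 * m)) (ZMod 2))) :
    ∃ F : Matrix (Fin (2 * m)) (Fin (2 * m)) (ZMod 2), IsUnit F ∧
      ∀ j j' : Fin (2 * m),
        commBit ((List.ofFn fun i => P i ^ (F j i).val).prod)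
            ((List.ofFn fun i => P i ^ (F j' i).val).prod)
          = if j ≠ j' ∧ (j : ℕ) / 2 = (j' : ℕ) / 2 then 1 else 0 := by
  set M : Matrix (Fin (2 * m)) (Fin (2 * m)) (ZMod 2) := of fun i j => commBit (P i) (P j)
  have hform : ∀ x y, commBit (List.ofFn fun i => P i ^ (x i).val).prod
      (List.ofFn fun i => P i ^ (y i).val).prod = toBilin' M x y := fun x y => by
    rw [toBilin'_apply', commBit_list_ofFn_prod_pow hP]
  have hA : (toBilin' M).IsAlt := fun x => by simp [← hform, commBit]
  have hN : (toBilin' M).Nondegenerate :=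
    BilinForm.nondegenerate_toBilin'_iff_det_ne_zero.2 ((isUnit_iff_isUnit_det M).1 hB).ne_zero
  obtain ⟨v, hv⟩ :=
    BilinForm.exists_symplectic_family_of_charTwo hA hN (finrank_fin_fun (ZMod 2))
  refine ⟨of v, isUnit_of_isUnit_mul_mul_transpose (M := M) ?_,
    fun j j' => (hform _ _).trans (hv j j')⟩
  have hJ := (Group.isUnit (pairSwap m)⁻¹).map (permMatrixHom (R := ZMod 2))
  rw [permMatrixHom_apply, inv_inv, permMatrix_pairSwap] at hJ
  convert hJ using 1
  ext j j'
  rw [mul_mul_transpose_apply, ← toBilin'_apply']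
  exact hv j j'
end
end

section
/- Let M and S be two stabilizer groups on n qubits. Then the quotient groups M/(M ∩ S^⊥) and S/(S ∩ M^⊥) are commutative groups of the same size. -/
open Matrix
open scoped Classical

noncomputable section

/-- A unit of the matrix algebra is a Pauli unitary. -/
def IsPauliU {n : ℕ} (u : (QOp n)ˣ) : Prop := IsPauli (u : QOp n)

/-- The `F₂` commutator bit on a group: `0` if the elements commute, `1` otherwise. -/
def commBitU {G : Type*} [Group G] (g h : G) : ZMod 2 := if g * h = h * g then 0 else 1

/-- A stabilizer group: a group of pairwise-commuting Hermitian Pauli observables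
not containing `-I`. -/
def IsStabilizerGroup {n : ℕ} (S : Subgroup (QOp n)ˣ) : Prop :=
  (∀ g ∈ S, IsPauliU g ∧ ((g : QOp n))ᴴ = (g : QOp n)) ∧
  (∀ g ∈ S, ∀ h ∈ S, g * h = h * g) ∧
  (-1 : (QOp n)ˣ) ∉ S


/-!
Pauli operators either commute or anticommute, so the commutation bit `⟨P, Q⟩ ∈ 𝔽₂` is additive
in each argument on Pauli units. For `m ∈ M` the row `s ↦ ⟨m, s⟩` vanishes exactly when `m`
centralizes `S`, so `|M / (M ∩ S^⊥)|` is the number of rows, which form an `𝔽₂`-subspace: the row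
space of the matrix `(⟨m, s⟩)`. Symmetrically `|S / (S ∩ M^⊥)|` is the size of its column space,
and row rank equals column rank. The commutativity claims are immediate, as `M` and `S` are abelian.
-/

lemma commBitU_eq_zero_iff {G : Type*} [Group G] (g h : G) :
    commBitU g h = 0 ↔ g * h = h * g := by
  unfold commBitU; split <;> simp_all

lemma commBitU_comm {G : Type*} [Group G] (g h : G) : commBitU g h = commBitU h g := by
  simp only [commBitU, eq_comm]

lemma commBitU_of_mul_eq {R : Type*} [Monoid R] {u w : Rˣ} (h : (u : R) * w = w * u) :
    commBitU u w = 0 := by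
  rw [commBitU, if_pos (Units.ext (by simpa using h))]

section SignedCommutation

variable {R : Type*} [Ring R] [Nontrivial R] [IsAddTorsionFree R]

lemma Units.mul_ne_of_mul_eq_neg {u w : Rˣ} (h : (u : R) * w = -(w * u)) :
    (u : R) * w ≠ w * u := fun hc =>
  (w * u).ne_zero (self_eq_neg.mp (hc.symm.trans h))

lemma commBitU_of_mul_eq_neg {u w : Rˣ} (h : (u : R) * w = -(w * u)) : commBitU u w = 1 := by
  rw [commBitU, if_neg (by simpa [Units.ext_iff] using Units.mul_ne_of_mul_eq_neg h)]

lemma commBitU_mul_left {u v w : Rˣ}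
    (hu : (u : R) * w = w * u ∨ (u : R) * w = -(w * u))
    (hv : (v : R) * w = w * v ∨ (v : R) * w = -(w * v)) :
    commBitU (u * v) w = commBitU u w + commBitU v w := by
  rcases hu with hu | hu <;> rcases hv with hv | hv
  · rw [commBitU_of_mul_eq hu, commBitU_of_mul_eq hv, commBitU_of_mul_eq]
    · rfl
    · rw [Units.val_mul, mul_assoc, hv, ← mul_assoc, hu, mul_assoc]
  · rw [commBitU_of_mul_eq hu, commBitU_of_mul_eq_neg hv, commBitU_of_mul_eq_neg]
    · rfl
    · rw [Units.val_mul, mul_assoc, hv, mul_neg, ← mul_assoc, hu, mul_assoc]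
  · rw [commBitU_of_mul_eq_neg hu, commBitU_of_mul_eq hv, commBitU_of_mul_eq_neg]
    · rfl
    · rw [Units.val_mul, mul_assoc, hv, ← mul_assoc, hu, neg_mul, mul_assoc]
  · rw [commBitU_of_mul_eq_neg hu, commBitU_of_mul_eq_neg hv, commBitU_of_mul_eq]
    · rfl
    · rw [Units.val_mul, mul_assoc, hv, mul_neg, ← mul_assoc, hu, neg_mul, neg_neg, mul_assoc]

end SignedCommutation

lemma exists_sq_eq_one_smul_iff {V : Type*} [AddCommGroup V] [Module ℂ V] (x y : V) :
    (∃ ε : ℂ, ε ^ 2 = 1 ∧ x = ε • y) ↔ x = y ∨ x = -y := by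
  constructor
  · rintro ⟨ε, hε, rfl⟩
    rcases sq_eq_one_iff.mp hε with rfl | rfl <;> simp
  · rintro (rfl | rfl)
    exacts [⟨1, one_pow 2, (one_smul ℂ x).symm⟩, ⟨-1, by norm_num, (neg_one_smul ℂ y).symm⟩]

instance Matrix.isAddTorsionFree {m n α : Type*} [AddMonoid α] [IsAddTorsionFree α] :
    IsAddTorsionFree (Matrix m n α) :=
  inferInstanceAs (IsAddTorsionFree (m → n → α))

def Matrix.piKronecker {ι d R : Type*} [Fintype ι] [CommSemiring R] (A : ι → Matrix d d R) :
    Matrix (ι → d) (ι → d) R :=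
  Matrix.of fun i j => ∏ k, A k (i k) (j k)

section PiKronecker

variable {ι d R : Type*} [Fintype ι] [CommSemiring R]

lemma Matrix.piKronecker_mul [DecidableEq ι] [Fintype d] (A B : ι → Matrix d d R) :
    piKronecker A * piKronecker B = piKronecker (A * B) := by
  ext i j
  simp only [piKronecker, mul_apply, of_apply, Pi.mul_apply]
  rw [Finset.prod_univ_sum, Fintype.piFinset_univ]
  exact Finset.sum_congr rfl fun _ _ => Finset.prod_mul_distrib.symm

lemma Matrix.piKronecker_smul (c : ι → R) (A : ι → Matrix d d R) :
    piKronecker (c • A) = (∏ k, c k) • piKronecker A := by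
  ext i j
  simp [piKronecker, Finset.prod_mul_distrib]

end PiKronecker

lemma pauliTensor_eq_piKronecker (n : ℕ) (a : Fin n → Fin 4) :
    pauliTensor n a = Matrix.piKronecker fun k => sigma1 (a k) := rfl

lemma sigma1_mul_comm_or_eq_neg (a b : Fin 4) :
    sigma1 a * sigma1 b = sigma1 b * sigma1 a ∨ sigma1 a * sigma1 b = -(sigma1 b * sigma1 a) := by
  fin_cases a <;> fin_cases b <;>
    simp only [sigma1, Matrix.one_fin_two] <;>
    norm_num [Matrix.mul_fin_two] <;>
    · right
      ext i j
      fin_cases i <;> fin_cases j <;> simp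

lemma pauliTensor_mul_eq_smul {n : ℕ} (a b : Fin n → Fin 4) :
    ∃ ε : ℂ, ε ^ 2 = 1 ∧
      pauliTensor n a * pauliTensor n b = ε • (pauliTensor n b * pauliTensor n a) := by
  choose ε hε hsite using fun k =>
    (exists_sq_eq_one_smul_iff _ _).mpr (sigma1_mul_comm_or_eq_neg (a k) (b k))
  refine ⟨∏ k, ε k, by rw [← Finset.prod_pow, Finset.prod_eq_one fun k _ => hε k], ?_⟩
  simp only [pauliTensor_eq_piKronecker, Matrix.piKronecker_mul, ← Matrix.piKronecker_smul]
  exact congrArg Matrix.piKronecker (funext hsite)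

lemma IsPauli.mul_comm_or_eq_neg {n : ℕ} {P Q : QOp n} (hP : IsPauli P) (hQ : IsPauli Q) :
    P * Q = Q * P ∨ P * Q = -(Q * P) := by
  obtain ⟨s, a, rfl⟩ := hP
  obtain ⟨t, b, rfl⟩ := hQ
  obtain ⟨ε, hε, hab⟩ := pauliTensor_mul_eq_smul a b
  refine (exists_sq_eq_one_smul_iff _ _).mp ⟨ε, hε, ?_⟩
  simp only [smul_mul_smul_comm, hab, smul_smul, mul_comm]

lemma finite_setOf_isPauli (n : ℕ) : {P : QOp n | IsPauli P}.Finite :=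
  (Set.finite_range fun p : Fin 4 × (Fin n → Fin 4) => Complex.I ^ (p.1 : ℕ) • pauliTensor n p.2
    ).subset fun _ ⟨s, a, hP⟩ => ⟨(s, a), hP.symm⟩

lemma IsStabilizerGroup.finite {n : ℕ} {S : Subgroup (QOp n)ˣ} (hS : IsStabilizerGroup S) :
    Finite S :=
  have := (finite_setOf_isPauli n).to_subtype
  Finite.of_injective
    (fun g : S => (⟨((g : (QOp n)ˣ) : QOp n), (hS.1 g g.2).1⟩ : {P : QOp n | IsPauli P}))
    fun _ _ h => Subtype.ext (Units.ext (congrArg Subtype.val h))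

lemma IsStabilizerGroup.mul_mul_inv_mul_inv_mem {n : ℕ} {T : Subgroup (QOp n)ˣ}
    (hT : IsStabilizerGroup T) (U : Subgroup (QOp n)ˣ) :
    ∀ g ∈ T, ∀ h ∈ T, g * h * g⁻¹ * h⁻¹ ∈ U := fun g hg h hh => by
  rw [← commutatorElement_def, commutatorElement_eq_one_iff_mul_comm.mpr (hT.2.1 g hg h hh)]
  exact U.one_mem

lemma IsStabilizerGroup.commBitU_mul_left {n : ℕ} {T U : Subgroup (QOp n)ˣ}
    (hT : IsStabilizerGroup T) (hU : IsStabilizerGroup U) :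
    ∀ g₁ ∈ T, ∀ g₂ ∈ T, ∀ h ∈ U, commBitU (g₁ * g₂) h = commBitU g₁ h + commBitU g₂ h :=
  fun _ h₁ _ h₂ _ h => _root_.commBitU_mul_left
    ((hT.1 _ h₁).1.mul_comm_or_eq_neg (hU.1 _ h).1) ((hT.1 _ h₂).1.mul_comm_or_eq_neg (hU.1 _ h).1)

lemma card_span_range_eq_card_span_range_flip {K α β : Type*} [Field K] [Fintype K]
    [Finite α] [Finite β] (f : α → β → K) :
    Nat.card (Submodule.span K (Set.range f))
      = Nat.card (Submodule.span K (Set.range (flip f))) := by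
  have := Fintype.ofFinite α
  have := Fintype.ofFinite β
  have hrank : Module.finrank K (Submodule.span K (Set.range f))
      = Module.finrank K (Submodule.span K (Set.range (flip f))) :=
    (Matrix.rank_eq_finrank_span_row (Matrix.of f)).symm.trans
      (Matrix.rank_eq_finrank_span_cols (Matrix.of f))
  exact Nat.card_congr (LinearEquiv.ofFinrankEq _ _ hrank).toEquiv

lemma AddMonoidHom.card_span_range {A X : Type*} [AddGroup A] [AddCommGroup X] (n : ℕ)
    [Module (ZMod n) X] (ψ : A →+ X) :
    Nat.card (Submodule.span (ZMod n) (Set.range ψ)) = Nat.card ψ.range := by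
  rw [← AddMonoidHom.coe_range, ← AddSubgroup.coe_toZModSubmodule n, Submodule.span_eq]
  rfl

section CommPairing

variable {G : Type*} [Group G]

def commPairing (M S : Subgroup G) : M → S → ZMod 2 := fun m s => commBitU (m : G) s

lemma flip_commPairing (M S : Subgroup G) : flip (commPairing M S) = commPairing S M :=
  funext₂ fun _ _ => commBitU_comm _ _

lemma relIndex_centralizer_eq_card_span {M S : Subgroup G}
    (hadd : ∀ g₁ ∈ M, ∀ g₂ ∈ M, ∀ h ∈ S, commBitU (g₁ * g₂) h = commBitU g₁ h + commBitU g₂ h) :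
    (Subgroup.centralizer (S : Set G)).relIndex M
      = Nat.card (Submodule.span (ZMod 2) (Set.range (commPairing M S))) := by
  let ψ : Additive M →+ (S → ZMod 2) := AddMonoidHom.mk' (fun m => commPairing M S m.toMul)
    fun m₁ m₂ => funext fun s => hadd _ m₁.toMul.2 _ m₂.toMul.2 _ s.2
  have hker : ψ.ker = ((Subgroup.centralizer (S : Set G)).subgroupOf M).toAddSubgroup := by
    ext m
    simp only [AddMonoidHom.mem_ker, Additive.mem_toAddSubgroup, Subgroup.mem_subgroupOf,
      Subgroup.mem_centralizer_iff, funext_iff]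
    exact ⟨fun h s hs => ((commBitU_eq_zero_iff _ _).mp (h ⟨s, hs⟩)).symm,
      fun h s => (commBitU_eq_zero_iff _ _).mpr (h s s.2).symm⟩
  rw [Subgroup.relIndex, ← Subgroup.index_toAddSubgroup, ← hker, AddSubgroup.index_ker,
    ← ψ.card_span_range 2]
  rfl

end CommPairing

/-- For stabilizer groups `M, S`, the quotients `M/(M ∩ S^⊥)` and `S/(S ∩ M^⊥)` are
commutative groups (all commutators lie in the subgroup quotiented by) of the same size,
where `G^⊥` is realized as the centralizer of `G`. -/
theorem quotients_commutative_same_size (n : ℕ) (M S : Subgroup (QOp n)ˣ)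
    (hM : IsStabilizerGroup M) (hS : IsStabilizerGroup S) :
    (∀ g ∈ M, ∀ h ∈ M, g * h * g⁻¹ * h⁻¹ ∈ Subgroup.centralizer (S : Set (QOp n)ˣ)) ∧
    (∀ g ∈ S, ∀ h ∈ S, g * h * g⁻¹ * h⁻¹ ∈ Subgroup.centralizer (M : Set (QOp n)ˣ)) ∧
    (Subgroup.centralizer (S : Set (QOp n)ˣ)).relIndex M
      = (Subgroup.centralizer (M : Set (QOp n)ˣ)).relIndex S := by
  have := hM.finite
  have := hS.finite
  refine ⟨hM.mul_mul_inv_mul_inv_mem _, hS.mul_mul_inv_mul_inv_mem _, ?_⟩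
  rw [relIndex_centralizer_eq_card_span (hM.commBitU_mul_left hS),
    relIndex_centralizer_eq_card_span (hS.commBitU_mul_left hM), ← flip_commPairing]
  exact card_span_range_eq_card_span_range_flip _
end
end

section
/- Let R be an n×n matrix over F_2 in (n_r, n_m)-split reduced echelon form and M an m×n matrix over F_2 whose transpose is in reduced row echelon form with full column rank (i.e., M is in (n,0)-split echelon form). Then the product MR is in (n_r, n_m)-split reduced echelon form. -/
/-!
Write `V = Mᵀ`: it is in reduced row echelon form and, as `M` has independent columns, each of its
rows `k` has a pivot, at a column `piv k`, with `piv` strictly increasing. The left and right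
parts of `M * R` are those of `R` multiplied on the right by `V`. Right multiplication by `V`
puts the entry `a k` of a row `a` at column `piv k` (the pivot columns of `V` form an identity
matrix) and moves the leading entry of `a` from column `k` to column `piv k`. Hence it preserves
row echelon form, reduced row echelon form and the vanishing of the right part in the pivot
columns of the left part. Full column rank passes to `M * R` because both `M` and `R` have
injective `mulVec`.
-/

open Matrix

/-- `A` has a leading (pivot) entry in row `i` at column `j`. -/
def IsLead {p q : ℕ} (A : Matrix (Fin p) (Fin q) (ZMod 2)) (i : Fin p) (j : Fin q) : Prop :=
  A i j ≠ 0 ∧ ∀ j' < j, A i j' = 0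

/-- `A` is in row echelon form: the leading entry of each nonzero row lies strictly to the
right of the leading entry of every earlier row (in particular, zero rows are at the bottom). -/
def IsRowEchelon {p q : ℕ} (A : Matrix (Fin p) (Fin q) (ZMod 2)) : Prop :=
  ∀ i₁ i₂ : Fin p, i₁ < i₂ → ∀ j₂ : Fin q, IsLead A i₂ j₂ → ∃ j₁ < j₂, IsLead A i₁ j₁

/-- `A` is in reduced row echelon form: row echelon form and each pivot column has a single
nonzero entry. -/
def IsRREF {p q : ℕ} (A : Matrix (Fin p) (Fin q) (ZMod 2)) : Prop :=
  _root_.IsRowEchelon A ∧ ∀ i j, IsLead A i j → ∀ i' ≠ i, A i' j = 0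

/-- The left part `Mᵀ_{[n_r]}` of `M`: the transpose of its first `n_r` columns. -/
def leftPart {m n_r n_m : ℕ} (M : Matrix (Fin m) (Fin (n_r + n_m)) (ZMod 2)) :
    Matrix (Fin n_r) (Fin m) (ZMod 2) :=
  Matrix.of fun j i => M i (Fin.castAdd n_m j)

/-- The right part `Mᵀ_{[n_r+1, n_r+n_m]}` of `M`: the transpose of its last `n_m` columns. -/
def rightPart {m n_r n_m : ℕ} (M : Matrix (Fin m) (Fin (n_r + n_m)) (ZMod 2)) :
    Matrix (Fin n_m) (Fin m) (ZMod 2) :=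
  Matrix.of fun j i => M i (Fin.natAdd n_r j)

/-- `M` is in `(n_r, n_m)`-split echelon form: `M` has full column rank, its left part is in
reduced row echelon form, its right part is in row echelon form, and every row of `M` carrying
a leading one of the left part vanishes in the right part. -/
def InSplitEchelon {m : ℕ} (n_r n_m : ℕ) (M : Matrix (Fin m) (Fin (n_r + n_m)) (ZMod 2)) :
    Prop :=
  LinearIndependent (ZMod 2) (fun j : Fin (n_r + n_m) => (fun i => M i j : Fin m → ZMod 2)) ∧
  IsRREF (leftPart M) ∧
  _root_.IsRowEchelon (rightPart M) ∧
  ∀ (l : Fin n_r) (i : Fin m), IsLead (leftPart M) l i → ∀ j : Fin n_m, rightPart M j i = 0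

/-- `M` is in `(n_r, n_m)`-split reduced echelon form: split echelon form whose right part is
also in reduced row echelon form. -/
def InSplitReducedEchelon {m : ℕ} (n_r n_m : ℕ)
    (M : Matrix (Fin m) (Fin (n_r + n_m)) (ZMod 2)) : Prop :=
  InSplitEchelon n_r n_m M ∧ IsRREF (rightPart M)

theorem Matrix.linearIndependent_col_mul {ι κ μ R : Type*} [Fintype κ] [Fintype μ] [CommRing R]
    {A : Matrix ι κ R} {B : Matrix κ μ R} (hA : LinearIndependent R A.col)
    (hB : LinearIndependent R B.col) : LinearIndependent R (A * B).col := by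
  rw [← Matrix.mulVec_injective_iff] at hA hB ⊢
  have hcomp : (A * B).mulVec = A.mulVec ∘ B.mulVec := funext fun v => (mulVec_mulVec v A B).symm
  exact hcomp ▸ hA.comp hB

section Pivots

variable {p q r : ℕ}

theorem IsLead.unique {A : Matrix (Fin p) (Fin q) (ZMod 2)} {i : Fin p} {j j' : Fin q}
    (h : IsLead A i j) (h' : IsLead A i j') : j = j' := by
  by_contra hne
  rcases lt_or_gt_of_ne hne with hlt | hgt
  · exact h.1 (h'.2 j hlt)
  · exact h'.1 (h.2 j' hgt)

theorem exists_isLead_of_row_ne_zero {A : Matrix (Fin p) (Fin q) (ZMod 2)} {i : Fin p}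
    (h : A i ≠ 0) : ∃ j, IsLead A i j := by
  obtain ⟨j, hj, hmin⟩ := wellFounded_lt.has_min {j | A i j ≠ 0} (Function.ne_iff.mp h)
  exact ⟨j, hj, fun j' hj' => by_contra fun hne => hmin j' hne hj'⟩

variable {V : Matrix (Fin q) (Fin r) (ZMod 2)} {piv : Fin q → Fin r}

theorem IsRowEchelon.strictMono_of_isLead (hV : _root_.IsRowEchelon V)
    (hpiv : ∀ k, IsLead V k (piv k)) : StrictMono piv := by
  intro k₁ k₂ hk
  obtain ⟨j₁, hj₁, hlead⟩ := hV k₁ k₂ hk (piv k₂) (hpiv k₂)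
  exact (hpiv k₁).unique hlead ▸ hj₁

theorem IsRREF.apply_pivot (hV : IsRREF V) (hpiv : ∀ k, IsLead V k (piv k)) (k k' : Fin q) :
    V k' (piv k) = (1 : Matrix (Fin q) (Fin q) (ZMod 2)) k' k := by
  by_cases h : k' = k
  · subst h
    -- a nonzero element of `ZMod 2 = Fin 2` is `1`
    exact (Fin.eq_one_of_ne_zero _ (hpiv k').1).trans (one_apply_eq k').symm
  · rw [hV.2 k (piv k) (hpiv k) k' h, one_apply_ne h]

theorem IsRREF.mul_apply_pivot (hV : IsRREF V) (hpiv : ∀ k, IsLead V k (piv k))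
    (A : Matrix (Fin p) (Fin q) (ZMod 2)) (j : Fin p) (k : Fin q) :
    (A * V) j (piv k) = A j k := by
  simp only [mul_apply, hV.apply_pivot hpiv]
  rw [← mul_apply, Matrix.mul_one]

theorem IsRREF.isLead_mul (hV : IsRREF V) (hpiv : ∀ k, IsLead V k (piv k))
    {A : Matrix (Fin p) (Fin q) (ZMod 2)} {j : Fin p} {k : Fin q} (h : IsLead A j k) :
    IsLead (A * V) j (piv k) := by
  refine ⟨hV.mul_apply_pivot hpiv A j k ▸ h.1, fun i hi => ?_⟩
  rw [mul_apply]
  refine Finset.sum_eq_zero fun k' _ => ?_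
  rcases lt_or_ge k' k with hk' | hk'
  · rw [h.2 k' hk', zero_mul]
  · have hlt : i < piv k' := hi.trans_le ((hV.1.strictMono_of_isLead hpiv).monotone hk')
    rw [(hpiv k').2 i hlt, mul_zero]

theorem IsRREF.isLead_mul_iff (hV : IsRREF V) (hpiv : ∀ k, IsLead V k (piv k))
    {A : Matrix (Fin p) (Fin q) (ZMod 2)} {j : Fin p} {i : Fin r} :
    IsLead (A * V) j i ↔ ∃ k, IsLead A j k ∧ piv k = i := by
  refine ⟨fun h => ?_, fun ⟨k, hk, hi⟩ => hi ▸ hV.isLead_mul hpiv hk⟩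
  have hrow : A j ≠ 0 := fun h0 => h.1 (by simp [mul_apply, h0])
  obtain ⟨k, hk⟩ := exists_isLead_of_row_ne_zero hrow
  exact ⟨k, hk, (hV.isLead_mul hpiv hk).unique h⟩

theorem IsRowEchelon.mul_isRREF {A : Matrix (Fin p) (Fin q) (ZMod 2)}
    (hA : _root_.IsRowEchelon A) (hV : IsRREF V) (hpiv : ∀ k, IsLead V k (piv k)) :
    _root_.IsRowEchelon (A * V) := by
  intro i₁ i₂ hi j₂ hj₂
  obtain ⟨k₂, hk₂, rfl⟩ := (hV.isLead_mul_iff hpiv).mp hj₂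
  obtain ⟨k₁, hk, hk₁⟩ := hA i₁ i₂ hi k₂ hk₂
  exact ⟨piv k₁, hV.1.strictMono_of_isLead hpiv hk, hV.isLead_mul hpiv hk₁⟩

theorem IsRREF.mul_isRREF {A : Matrix (Fin p) (Fin q) (ZMod 2)} (hA : IsRREF A)
    (hV : IsRREF V) (hpiv : ∀ k, IsLead V k (piv k)) : IsRREF (A * V) := by
  refine ⟨hA.1.mul_isRREF hV hpiv, fun i j hij i' hi' => ?_⟩
  obtain ⟨k, hk, rfl⟩ := (hV.isLead_mul_iff hpiv).mp hij
  rw [hV.mul_apply_pivot hpiv]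
  exact hA.2 i k hk i' hi'

end Pivots

theorem leftPart_mul {m n n_r n_m : ℕ} (M : Matrix (Fin m) (Fin n) (ZMod 2))
    (R : Matrix (Fin n) (Fin (n_r + n_m)) (ZMod 2)) :
    leftPart (M * R) = leftPart R * Mᵀ := by
  ext j i
  simp [leftPart, mul_apply, mul_comm]

theorem rightPart_mul {m n n_r n_m : ℕ} (M : Matrix (Fin m) (Fin n) (ZMod 2))
    (R : Matrix (Fin n) (Fin (n_r + n_m)) (ZMod 2)) :
    rightPart (M * R) = rightPart R * Mᵀ := by
  ext j i
  simp [rightPart, mul_apply, mul_comm]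

/-- If `R` (square, `n = n_r + n_m`) is in `(n_r, n_m)`-split reduced echelon form and `M` is
an `m×n` matrix in `(n, 0)`-split echelon form (i.e. `Mᵀ` is in reduced row echelon form and
`M` has full column rank), then `M * R` is in `(n_r, n_m)`-split reduced echelon form. -/
theorem mul_split_reduced_echelon (n_r n_m m : ℕ)
    (R : Matrix (Fin (n_r + n_m)) (Fin (n_r + n_m)) (ZMod 2))
    (M : Matrix (Fin m) (Fin (n_r + n_m)) (ZMod 2))
    (hR : InSplitReducedEchelon n_r n_m R)
    (hM₁ : IsRREF Mᵀ)
    (hM₂ : LinearIndependent (ZMod 2)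
      (fun j : Fin (n_r + n_m) => (fun i => M i j : Fin m → ZMod 2))) :
    InSplitReducedEchelon n_r n_m (M * R) := by
  obtain ⟨⟨hRind, hRleft, hRrightEchelon, hRcross⟩, hRrightRREF⟩ := hR
  choose piv hpiv using fun k => exists_isLead_of_row_ne_zero (A := Mᵀ) (hM₂.ne_zero k)
  refine ⟨⟨linearIndependent_col_mul (A := M) (B := R) hM₂ hRind, ?_, ?_, ?_⟩, ?_⟩
  · rw [leftPart_mul]
    exact hRleft.mul_isRREF hM₁ hpiv
  · rw [rightPart_mul]
    exact hRrightEchelon.mul_isRREF hM₁ hpiv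
  · intro l i hl j
    rw [leftPart_mul, hM₁.isLead_mul_iff hpiv] at hl
    obtain ⟨k, hk, rfl⟩ := hl
    rw [rightPart_mul, hM₁.mul_apply_pivot hpiv]
    exact hRcross l k hk j
  · rw [rightPart_mul]
    exact hRrightRREF.mul_isRREF hM₁ hpiv
end

section
/- Let A be an m×n matrix over F_2 of full row rank m. Then there exist an n×n invertible matrix R in (n−m, m)-split reduced echelon form and an m×m invertible matrix F such that AR = (0_{m×(n−m)} | F). -/
open Matrix

/-!
Let `W = ker A`, of dimension `k`, and let `L` be the set of positions at which vectors of `W`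
have their leading entry. Restriction to `L` is an isomorphism `W ≃ F₂^L` (injective since a
nonzero vector is nonzero at its leading position, surjective by triangularity), so `|L| = k`
and `W` has a reduced basis `v_j` (`j ∈ L`) with `v_j` equal to `e_j` on `L`; `v_j` then leads
at `j`. Take for `R` the columns `v_j` followed by the unit vectors `e_q` for `q ∉ L`, both in
increasing order. Then `A R = (0 | A_Q)` with `Q = Lᶜ`, both parts of `R` are in reduced
echelon form with disjoint pivots, `R` is invertible by evaluating at `L` and then at `Q`, and
`A_Q x = 0` forces `∑ x_q e_q ∈ W`, which vanishes on `L` and hence is zero.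
-/

open Module

theorem isUnit_of_forall_mulVec_eq_zero {K ι : Type*} [Field K] [Fintype ι] [DecidableEq ι]
    {M : Matrix ι ι K} (h : ∀ v, M *ᵥ v = 0 → v = 0) : IsUnit M :=
  Matrix.mulVec_injective_iff_isUnit.mp <| (injective_iff_map_eq_zero M.mulVecLin).mpr h

section LeadingIndex

variable {K : Type*} [Field K] {n : ℕ}

def IsLeadingIndex (v : Fin n → K) (j : Fin n) : Prop :=
  v j ≠ 0 ∧ ∀ j' < j, v j' = 0

theorem IsLeadingIndex.eq {v : Fin n → K} {j j' : Fin n} (h : IsLeadingIndex v j)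
    (h' : IsLeadingIndex v j') : j = j' := by
  by_contra hne
  rcases lt_or_gt_of_ne hne with hlt | hlt
  · exact h.1 (h'.2 j hlt)
  · exact h'.1 (h.2 j' hlt)

theorem exists_isLeadingIndex {v : Fin n → K} (hv : v ≠ 0) : ∃ j, IsLeadingIndex v j := by
  classical
  obtain ⟨j, hj⟩ := Function.ne_iff.mp hv
  set s := Finset.univ.filter (v · ≠ 0)
  have hs : s.Nonempty := ⟨j, by simpa [s] using hj⟩
  refine ⟨s.min' hs, (Finset.mem_filter.mp (s.min'_mem hs)).2, fun j' hj' => ?_⟩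
  by_contra h
  exact (s.min'_le j' (by simpa [s] using h)).not_gt hj'

open Classical in
noncomputable def leadingIndices (W : Submodule K (Fin n → K)) : Finset (Fin n) :=
  Finset.univ.filter fun j => ∃ v ∈ W, IsLeadingIndex v j

variable {W : Submodule K (Fin n → K)}

theorem mem_leadingIndices {j : Fin n} :
    j ∈ leadingIndices W ↔ ∃ v ∈ W, IsLeadingIndex v j := by
  simp [leadingIndices]

theorem eq_zero_of_forall_leadingIndices {v : Fin n → K} (hv : v ∈ W)
    (h : ∀ j ∈ leadingIndices W, v j = 0) : v = 0 := by
  by_contra hne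
  obtain ⟨j, hj⟩ := exists_isLeadingIndex hne
  exact hj.1 (h j (mem_leadingIndices.mpr ⟨v, hv, hj⟩))

variable (W) in
noncomputable def restrictLeading : W →ₗ[K] (leadingIndices W → K) :=
  LinearMap.funLeft K K Subtype.val ∘ₗ W.subtype

theorem restrictLeading_injective : Function.Injective (restrictLeading W) := by
  rw [← LinearMap.ker_eq_bot, eq_bot_iff]
  intro w hw
  have hw0 : (w : Fin n → K) = 0 :=
    eq_zero_of_forall_leadingIndices w.2 fun j hj => congrFun (LinearMap.mem_ker.mp hw) ⟨j, hj⟩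
  simpa using hw0

/-- Vectors of `W` leading at the points of `leadingIndices W` restrict to the rows of a
triangular matrix with nonzero diagonal. -/
theorem restrictLeading_surjective : Function.Surjective (restrictLeading W) := by
  choose w hwW hwL using fun j : leadingIndices W => mem_leadingIndices.mp j.2
  let M : Matrix (leadingIndices W) (leadingIndices W) K := Matrix.of fun j j' => w j j'
  have hM : IsUnit M := by
    have htri : M.IsUpperTriangular := fun j j' hlt => (hwL j).2 j' hlt
    rw [Matrix.isUnit_iff_isUnit_det, Matrix.det_of_isUpperTriangular htri]
    exact (Finset.prod_ne_zero_iff.mpr fun j _ => (hwL j).1).isUnit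
  intro x
  obtain ⟨c, hc⟩ := Matrix.vecMul_surjective_iff_isUnit.mpr hM x
  refine ⟨∑ j, c j • ⟨w j, hwW j⟩, ?_⟩
  rw [← hc]
  ext j'
  simp [restrictLeading, LinearMap.funLeft, Matrix.vecMul, dotProduct, M, mul_comm]

variable (W) in
noncomputable def leadingEquiv : W ≃ₗ[K] (leadingIndices W → K) :=
  .ofBijective (restrictLeading W) ⟨restrictLeading_injective, restrictLeading_surjective⟩

theorem card_leadingIndices : (leadingIndices W).card = finrank K W := by
  simpa using (leadingEquiv W).finrank_eq.symm

variable (W) in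
noncomputable def reducedVec (j : leadingIndices W) : Fin n → K :=
  (leadingEquiv W).symm (Pi.single j 1)

theorem reducedVec_mem (j : leadingIndices W) : reducedVec W j ∈ W :=
  ((leadingEquiv W).symm _).2

theorem reducedVec_apply (j j' : leadingIndices W) :
    reducedVec W j j' = if j = j' then 1 else 0 := by
  have h := congrFun ((leadingEquiv W).apply_symm_apply (Pi.single j 1)) j'
  simp only [Pi.single_apply, eq_comm (a := j')] at h
  exact h

theorem isLeadingIndex_reducedVec (j : leadingIndices W) : IsLeadingIndex (reducedVec W j) j := by
  have hne : reducedVec W j ≠ 0 := fun h => by simpa [h] using reducedVec_apply j j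
  obtain ⟨j', hj'⟩ := exists_isLeadingIndex hne
  have hj'W : j' ∈ leadingIndices W := mem_leadingIndices.mpr ⟨_, reducedVec_mem j, hj'⟩
  obtain rfl : (⟨j', hj'W⟩ : leadingIndices W) = j := by
    by_contra hc
    exact hj'.1 (by simpa [Ne.symm hc] using reducedVec_apply j ⟨j', hj'W⟩)
  exact hj'

end LeadingIndex

section SplitMatrix

variable {K : Type*} [Field K] {k m : ℕ}

def splitMatrix (v : Fin k → Fin (k + m) → K) (q : Fin m → Fin (k + m)) :
    Matrix (Fin (k + m)) (Fin (k + m)) K :=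
  (Matrix.of (Fin.append v fun j => Pi.single (q j) (1 : K)))ᵀ

variable (v : Fin k → Fin (k + m) → K) (q : Fin m → Fin (k + m))

@[simp]
theorem splitMatrix_castAdd (i : Fin (k + m)) (t : Fin k) :
    splitMatrix v q i (Fin.castAdd m t) = v t i := by
  simp [splitMatrix]

@[simp]
theorem splitMatrix_natAdd (i : Fin (k + m)) (j : Fin m) :
    splitMatrix v q i (Fin.natAdd k j) = (Pi.single (q j) 1 : Fin (k + m) → K) i := by
  simp [splitMatrix]

theorem splitMatrix_mulVec_apply (y : Fin (k + m) → K) (i : Fin (k + m)) :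
    (splitMatrix v q *ᵥ y) i =
      ∑ t, v t i * y (Fin.castAdd m t) +
        ∑ j, (Pi.single (q j) 1 : Fin (k + m) → K) i * y (Fin.natAdd k j) := by
  simp [Matrix.mulVec, dotProduct, Fin.sum_univ_add]

theorem mul_splitMatrix_castAdd {p : ℕ} (A : Matrix (Fin p) (Fin (k + m)) K) (i : Fin p)
    (t : Fin k) : (A * splitMatrix v q) i (Fin.castAdd m t) = (A *ᵥ v t) i := by
  simp [Matrix.mul_apply, Matrix.mulVec, dotProduct]

theorem mul_splitMatrix_natAdd {p : ℕ} (A : Matrix (Fin p) (Fin (k + m)) K) (i : Fin p)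
    (j : Fin m) : (A * splitMatrix v q) i (Fin.natAdd k j) = A i (q j) := by
  simp [Matrix.mul_apply, Pi.single_apply]

theorem mul_splitMatrix_mulVec_append_zero {p : ℕ} (A : Matrix (Fin p) (Fin (k + m)) K)
    (x : Fin m → K) : (A * splitMatrix v q) *ᵥ Fin.append 0 x = A.submatrix id q *ᵥ x := by
  ext i
  simp [Matrix.mulVec, dotProduct, Fin.sum_univ_add, mul_splitMatrix_natAdd]

variable {v q} {l : Fin k → Fin (k + m)}

theorem splitMatrix_mulVec_apply_left (hv : ∀ s t, v s (l t) = if s = t then 1 else 0)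
    (hlq : ∀ t j, l t ≠ q j) (y : Fin (k + m) → K) (t : Fin k) :
    (splitMatrix v q *ᵥ y) (l t) = y (Fin.castAdd m t) := by
  simp [splitMatrix_mulVec_apply, hv, hlq]

theorem eq_zero_of_splitMatrix_mulVec_eq_zero (hv : ∀ s t, v s (l t) = if s = t then 1 else 0)
    (hlq : ∀ t j, l t ≠ q j) (hq : Function.Injective q) {y : Fin (k + m) → K}
    (hy : splitMatrix v q *ᵥ y = 0) : y = 0 := by
  have hleft : ∀ t, y (Fin.castAdd m t) = 0 := fun t => by
    rw [← splitMatrix_mulVec_apply_left hv hlq y t, hy, Pi.zero_apply]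
  have hright : ∀ j, y (Fin.natAdd k j) = 0 := fun j => by
    simpa [splitMatrix_mulVec_apply, hleft, Pi.single_apply, hq.eq_iff] using congrFun hy (q j)
  ext i
  exact Fin.addCases hleft hright i

theorem isUnit_splitMatrix (hv : ∀ s t, v s (l t) = if s = t then 1 else 0)
    (hlq : ∀ t j, l t ≠ q j) (hq : Function.Injective q) : IsUnit (splitMatrix v q) :=
  isUnit_of_forall_mulVec_eq_zero fun _ => eq_zero_of_splitMatrix_mulVec_eq_zero hv hlq hq

theorem isUnit_submatrix_of_ker (hv : ∀ s t, v s (l t) = if s = t then 1 else 0)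
    (hlq : ∀ t j, l t ≠ q j) (hq : Function.Injective q) (A : Matrix (Fin m) (Fin (k + m)) K)
    (hker : ∀ u, A *ᵥ u = 0 → (∀ t, u (l t) = 0) → u = 0) :
    IsUnit (A.submatrix id q) := by
  refine isUnit_of_forall_mulVec_eq_zero fun x hx => ?_
  set y : Fin (k + m) → K := Fin.append 0 x
  have hRy : splitMatrix v q *ᵥ y = 0 := by
    refine hker _ ?_ fun t => ?_
    · rw [Matrix.mulVec_mulVec, mul_splitMatrix_mulVec_append_zero]
      exact hx
    · simp [splitMatrix_mulVec_apply_left hv hlq, y]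
  have hy : y = 0 := eq_zero_of_splitMatrix_mulVec_eq_zero hv hlq hq hRy
  ext j
  simpa [y] using congrFun hy (Fin.natAdd k j)

end SplitMatrix

section SplitEchelon

theorem isRREF_of_isLeadingIndex {p r : ℕ} {A : Matrix (Fin p) (Fin r) (ZMod 2)}
    {c : Fin p → Fin r} (hc : StrictMono c) (hlead : ∀ i, IsLeadingIndex (A i) (c i))
    (hpivot : ∀ i i', i' ≠ i → A i' (c i) = 0) : IsRREF A := by
  have hlead_eq : ∀ i j, IsLead A i j → j = c i := fun i j h => IsLeadingIndex.eq h (hlead i)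
  refine ⟨fun i₁ i₂ hlt j₂ hj₂ => ⟨c i₁, ?_, hlead i₁⟩, fun i j hj i' hi' => ?_⟩
  · rw [hlead_eq i₂ j₂ hj₂]
    exact hc hlt
  · rw [hlead_eq i j hj]
    exact hpivot i i' hi'

variable {k m : ℕ} {v : Fin k → Fin (k + m) → ZMod 2} {q : Fin m → Fin (k + m)}
  {l : Fin k → Fin (k + m)}

theorem inSplitReducedEchelon_splitMatrix (hl : StrictMono l) (hq : StrictMono q)
    (hlead : ∀ t, IsLeadingIndex (v t) (l t)) (hv : ∀ s t, v s (l t) = if s = t then 1 else 0)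
    (hlq : ∀ t j, l t ≠ q j) : InSplitReducedEchelon k m (splitMatrix v q) := by
  have hleft : leftPart (splitMatrix v q) = Matrix.of v := by
    ext t i
    simp [leftPart]
  have hright : rightPart (splitMatrix v q) = Matrix.of fun j => Pi.single (q j) 1 := by
    ext j i
    simp [rightPart]
  have hrightRREF : IsRREF (rightPart (splitMatrix v q)) := by
    rw [hright]
    refine isRREF_of_isLeadingIndex hq (fun j => ⟨by simp, fun i hi => ?_⟩) fun j j' hj => ?_
    · simp [hi.ne]
    · simp [hq.injective.ne hj]
  have hcols := Matrix.linearIndependent_cols_iff_isUnit.mpr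
    (isUnit_splitMatrix hv hlq hq.injective)
  refine ⟨⟨hcols, ?_, ?_, ?_⟩, ?_⟩
  · rw [hleft]
    exact isRREF_of_isLeadingIndex hl hlead fun t s hst => by simp [hv, hst]
  · exact hrightRREF.1
  · intro t i hti j
    rw [hleft] at hti
    rw [hright, IsLeadingIndex.eq hti (hlead t)]
    simp [hlq t j]
  · exact hrightRREF

end SplitEchelon

theorem finrank_ker_mulVecLin_of_linearIndependent_row {K : Type*} [Field K] {m k : ℕ}
    {A : Matrix (Fin m) (Fin (k + m)) K} (hA : LinearIndependent K A.row) :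
    finrank K (LinearMap.ker A.mulVecLin) = k := by
  have hrank : A.rank = m := by simpa using hA.rank_matrix
  have := LinearMap.finrank_range_add_finrank_ker A.mulVecLin
  rw [finrank_fintype_fun_eq_card, Fintype.card_fin, ← Matrix.rank, hrank] at this
  omega

/-- Block reshape: for any `m × (k+m)` matrix `A` over `F₂` of full row rank `m`, there exist
an invertible `(k+m)×(k+m)` matrix `R` in `(k, m)`-split reduced echelon form and an invertible
`m×m` matrix `F` with `A * R = (0_{m×k} | F)`. -/
theorem block_reshape (m k : ℕ) (A : Matrix (Fin m) (Fin (k + m)) (ZMod 2))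
    (hA : LinearIndependent (ZMod 2)
      (fun i : Fin m => (fun j => A i j : Fin (k + m) → ZMod 2))) :
    ∃ R : Matrix (Fin (k + m)) (Fin (k + m)) (ZMod 2),
      IsUnit R ∧ InSplitReducedEchelon k m R ∧
      ∃ F : Matrix (Fin m) (Fin m) (ZMod 2), IsUnit F ∧
        (∀ (i : Fin m) (j : Fin k), (A * R) i (Fin.castAdd m j) = 0) ∧
        (∀ i j : Fin m, (A * R) i (Fin.natAdd k j) = F i j) := by
  set W := LinearMap.ker A.mulVecLin
  set L := leadingIndices W
  have hk : L.card = k :=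
    card_leadingIndices.trans (finrank_ker_mulVecLin_of_linearIndependent_row hA)
  have hm : Lᶜ.card = m := by simp [Finset.card_compl, hk]
  let l := L.orderIsoOfFin hk
  let q := Lᶜ.orderIsoOfFin hm
  let v t := reducedVec W (l t)
  have hv : ∀ s t, v s (l t) = if s = t then 1 else 0 := fun s t => by
    simp only [v, reducedVec_apply, l.injective.eq_iff]
  have hlq : ∀ t j, (l t : Fin (k + m)) ≠ q j := fun t j h =>
    Finset.mem_compl.mp (q j).2 (h ▸ (l t).2)
  have hker : ∀ u, A *ᵥ u = 0 → (∀ t, u (l t) = 0) → u = 0 := fun u hu hul =>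
    eq_zero_of_forall_leadingIndices hu fun j hj => by
      simpa using hul (l.symm ⟨j, hj⟩)
  have hl : StrictMono fun t => (l t : Fin (k + m)) := l.strictMono
  have hq : StrictMono fun j => (q j : Fin (k + m)) := q.strictMono
  refine ⟨splitMatrix v (q ·), isUnit_splitMatrix hv hlq hq.injective,
    inSplitReducedEchelon_splitMatrix hl hq (fun t => isLeadingIndex_reducedVec (l t)) hv hlq,
    A.submatrix id (q ·), isUnit_submatrix_of_ker hv hlq hq.injective A hker,
    fun i t => ?_, fun i j => mul_splitMatrix_natAdd v _ A i j⟩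
  rw [mul_splitMatrix_castAdd]
  exact congrFun (LinearMap.mem_ker.mp (reducedVec_mem (l t))) i
end
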